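/- arXiv:math/9909082 — 6 statements merged into one kernel-verified Lean document; each statement's English description precedes it below -/
import Mathlib

section
/- Let V be a finite-dimensional vector space over a field of characteristic zero, and let e1, e2 be commuting linear endomorphisms of V. If V admits a cyclic vector for the pair (e1, e2) (i.e., a vector v such that the vectors e1^k e2^l v span V), then the centralizer of {e1, e2} in End(V) equals the unital subalgebra generated by e1 and e2. -/
theorem stmt0 {k V : Type*} [Field k] [CharZero k] [AddCommGroup V] [Module k V]
    [FiniteDimensional k V] (e1 e2 : Module.End k V) (hcomm : Commute e1 e2)
    (v : V)
    (hv : Submodule.span k {w : V | ∃ a b : ℕ, w = (e1 ^ a * e2 ^ b) v} = ⊤) :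
    {x : Module.End k V | Commute x e1 ∧ Commute x e2} =
      ↑(Algebra.adjoin k ({e1, e2} : Set (Module.End k V))) := by
  set A := Algebra.adjoin k ({e1, e2} : Set (Module.End k V)) with hA
  have hmem1 : e1 ∈ A := Algebra.subset_adjoin (by simp)
  have hmem2 : e2 ∈ A := Algebra.subset_adjoin (by simp)
  have hcomm' : ∀ y ∈ A, Commute y e1 ∧ Commute y e2 := by
    intro y hy
    induction hy using Algebra.adjoin_induction with
    | mem z hz =>
      rcases hz with rfl | rfl
      · exact ⟨Commute.refl _, hcomm⟩
      · exact ⟨hcomm.symm, Commute.refl _⟩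
    | algebraMap r => exact ⟨Algebra.commutes r e1, Algebra.commutes r e2⟩
    | add x y hx hy hx' hy' => exact ⟨hx'.1.add_left hy'.1, hx'.2.add_left hy'.2⟩
    | mul x y hx hy hx' hy' => exact ⟨hx'.1.mul_left hy'.1, hx'.2.mul_left hy'.2⟩
  ext x
  simp only [Set.mem_setOf_eq, SetLike.mem_coe]
  constructor
  · rintro ⟨h1, h2⟩
    have hle : Submodule.span k {w : V | ∃ a b : ℕ, w = (e1 ^ a * e2 ^ b) v} ≤
        Submodule.map (LinearMap.applyₗ v) (Subalgebra.toSubmodule A) := by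
      rw [Submodule.span_le]
      rintro w ⟨a, b, rfl⟩
      exact ⟨e1 ^ a * e2 ^ b, (Subalgebra.mem_toSubmodule _).mpr (mul_mem (pow_mem hmem1 a) (pow_mem hmem2 b)), rfl⟩
    rw [hv] at hle
    obtain ⟨y, hy, hyv⟩ := hle (Submodule.mem_top : x v ∈ ⊤)
    have hyv : y v = x v := hyv
    suffices hxy : x = y by rw [hxy]; exact hy
    obtain ⟨hy1, hy2⟩ := hcomm' y hy
    apply LinearMap.ext
    intro w
    have hw : w ∈ Submodule.span k {w : V | ∃ a b : ℕ, w = (e1 ^ a * e2 ^ b) v} := by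
      rw [hv]; exact Submodule.mem_top
    induction hw using Submodule.span_induction with
    | mem w hw =>
      obtain ⟨a, b, rfl⟩ := hw
      have cx : Commute x (e1 ^ a * e2 ^ b) := (h1.pow_right a).mul_right (h2.pow_right b)
      have cy : Commute y (e1 ^ a * e2 ^ b) := (hy1.pow_right a).mul_right (hy2.pow_right b)
      calc x ((e1 ^ a * e2 ^ b) v) = (x * (e1 ^ a * e2 ^ b)) v := rfl
        _ = ((e1 ^ a * e2 ^ b) * x) v := by rw [cx]
        _ = (e1 ^ a * e2 ^ b) (x v) := rfl
        _ = (e1 ^ a * e2 ^ b) (y v) := by rw [hyv]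
        _ = ((e1 ^ a * e2 ^ b) * y) v := rfl
        _ = (y * (e1 ^ a * e2 ^ b)) v := by rw [cy]
        _ = y ((e1 ^ a * e2 ^ b) v) := rfl
    | zero => simp
    | add u w hu hw hu' hw' => simp [hu', hw']
    | smul c u hu hu' => simp [hu']
  · exact hcomm' x
end

section
/- Let V be a finite-dimensional vector space over a field of characteristic zero with a nondegenerate alternating bilinear form ω, and let h ∈ End(V) be diagonalizable (over the field) and symplectic (ω(hx,y) = −ω(x,hy)). Then the restriction of ω to the kernel of h is nondegenerate; in particular, the 0-eigenspace of h is even-dimensional. -/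
/-!
Since `h` is diagonalizable, `V = ker h ⊔ range h`, and skew-adjointness gives
`ω x (h y) = -ω (h x) y = 0` for `x ∈ ker h`, so `ker h` is `ω`-orthogonal to `range h`.
A vector of `ker h` orthogonal to `ker h` is therefore orthogonal to all of `V`, hence zero.
The restriction of `ω` to `ker h` is then a nondegenerate alternating form; its Gram matrix is
skew-symmetric with nonzero determinant, which forces even dimension since
`det M = det Mᵀ = (-1) ^ n det M`.
-/

theorem Matrix.det_eq_zero_of_transpose_eq_neg {n R : Type*} [Fintype n] [DecidableEq n]
    [CommRing R] [NoZeroDivisors R] [NeZero (2 : R)] {A : Matrix n n R} (hA : A.transpose = -A)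
    (hn : Odd (Fintype.card n)) : A.det = 0 := by
  have h : A.det = -A.det :=
    calc A.det = A.transpose.det := (det_transpose A).symm
      _ = -A.det := by rw [hA, det_neg, hn.neg_one_pow, neg_one_mul]
  have h2 : (2 : R) * A.det = 0 := by linear_combination h
  exact (mul_eq_zero.mp h2).resolve_left two_ne_zero

open LinearMap (BilinForm)

namespace LinearMap.BilinForm

variable {V : Type*} [AddCommGroup V]

theorem even_finrank_of_isAlt_of_nondegenerate {k : Type*} [Field k] [NeZero (2 : k)]
    [Module k V] [FiniteDimensional k V] {B : BilinForm k V} (hB : B.IsAlt)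
    (hnd : B.Nondegenerate) :
    Even (Module.finrank k V) := by
  let b := Module.finBasis k V
  have hdet : (toMatrix b B).det ≠ 0 := (nondegenerate_iff_det_ne_zero b).mp hnd
  have hskew : (toMatrix b B).transpose = -toMatrix b B := by
    ext i j
    simp only [Matrix.transpose_apply, Matrix.neg_apply, toMatrix_apply, hB.neg_eq]
  by_contra hodd
  rw [Nat.not_even_iff_odd, ← Fintype.card_fin (Module.finrank k V)] at hodd
  exact hdet (Matrix.det_eq_zero_of_transpose_eq_neg hskew hodd)

theorem Nondegenerate.eq_zero_of_sup_eq_top {R : Type*} [CommRing R] [Module R V]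
    {B : BilinForm R V} (hB : B.Nondegenerate) {W U : Submodule R V} (hWU : W ⊔ U = ⊤)
    (hortho : ∀ x ∈ W, ∀ y ∈ U, B x y = 0)
    {x : V} (hx : x ∈ W) (hxW : ∀ y ∈ W, B x y = 0) : x = 0 := by
  refine hB.1 x fun y ↦ ?_
  obtain ⟨w, hw, u, hu, rfl⟩ := Submodule.mem_sup.mp (hWU ▸ Submodule.mem_top : y ∈ W ⊔ U)
  rw [map_add, hxW w hw, hortho x hx u hu, add_zero]

end LinearMap.BilinForm

theorem Module.End.ker_sup_range_eq_top {k V : Type*} [Field k] [AddCommGroup V] [Module k V]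
    {f : Module.End k V} (hdiag : (⨆ μ : k, f.eigenspace μ) = ⊤) :
    LinearMap.ker f ⊔ LinearMap.range f = ⊤ := by
  rw [eq_top_iff, ← hdiag, iSup_le_iff]
  intro μ
  rcases eq_or_ne μ 0 with rfl | hμ
  · exact eigenspace_zero f ▸ le_sup_left
  · intro z hz
    refine Submodule.mem_sup_right ⟨μ⁻¹ • z, ?_⟩
    rw [map_smul, mem_eigenspace_iff.mp hz, inv_smul_smul₀ hμ]

theorem stmt4 {k V : Type*} [Field k] [CharZero k]
    [AddCommGroup V] [Module k V] [FiniteDimensional k V]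
    (ω : LinearMap.BilinForm k V) (halt : ∀ x, ω x x = 0)
    (hnd : ω.Nondegenerate) (h : Module.End k V)
    (hdiag : (⨆ μ : k, h.eigenspace μ) = ⊤)
    (hsymp : ∀ x y, ω (h x) y = - ω x (h y)) :
    (∀ x ∈ LinearMap.ker h, (∀ y ∈ LinearMap.ker h, ω x y = 0) → x = 0) ∧
    Even (Module.finrank k ↥(LinearMap.ker h)) := by
  have hortho : ∀ x ∈ LinearMap.ker h, ∀ y ∈ LinearMap.range h, ω x y = 0 := by
    rintro x hx _ ⟨y, rfl⟩
    rw [← neg_eq_zero, ← hsymp, LinearMap.mem_ker.mp hx, map_zero, LinearMap.zero_apply]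
  have hker : ∀ x ∈ LinearMap.ker h, (∀ y ∈ LinearMap.ker h, ω x y = 0) → x = 0 :=
    fun _ hx ↦ hnd.eq_zero_of_sup_eq_top (Module.End.ker_sup_range_eq_top hdiag) hortho hx
  have hrestrict : (ω.restrict (LinearMap.ker h)).Nondegenerate :=
    ((LinearMap.IsAlt.isRefl halt).domRestrict _).nondegenerate_iff_separatingLeft.mpr
      fun x hx ↦ Subtype.ext (hker x x.2 fun y hy ↦ hx ⟨y, hy⟩)
  exact ⟨hker, LinearMap.BilinForm.even_finrank_of_isAlt_of_nondegenerate (fun x ↦ halt x)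
    hrestrict⟩
end

section
/- With the setup of the previous construction (finite set S ⊆ ℚ × ℚ satisfying the skew closure condition, basis vectors v_{(i,j)}), suppose S is centrally symmetric and i+j ∈ ℤ for all (i,j) ∈ S. Define the symmetric bilinear form B by B(v_{(i,j)}, v_{(−k,−l)}) = δ_{ik}δ_{jl}, and define ê1(v_{(i,j)}) = (−1)^{i+j} v_{(i+1,j)} (zero if (i+1,j) ∉ S) and ê2(v_{(i,j)}) = (−1)^{i+j+1} v_{(i,j+1)} (zero if (i,j+1) ∉ S). Then ê1 and ê2 commute and both are skew with respect to B: B(ê_a x, y) = −B(x, ê_a y) for a = 1, 2. -/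
/-!
Both operators are instances of one pattern: a signed shift `v_p ↦ ± v_{p + d}` with
`d.1 + d.2 = 1` and sign `(-1)^(p.1 + p.2 + c)`. Skewness holds because `B(ê v_p, v_q)` and
`B(v_p, ê v_q)` are nonzero exactly when `p + q + d = 0`, and then `p.1 + p.2` and `q.1 + q.2`
add up to `-1`, so the two signs are opposite. For commutation, both composites send `v_p` to
`± v_{p + d + d'}` with the same sign; skew closure guarantees that neither composite is
killed at the intermediate node while the other survives.
-/

open Module

theorem neg_one_zpow_eq_neg_of_odd_add {α : Type*} [DivisionRing α] {m n : ℤ}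
    (h : Odd (m + n)) : (-1 : α) ^ m = -(-1) ^ n := by
  rcases Int.even_or_odd n with hn | hn
  · rw [(Int.odd_add.mp h |>.mpr hn).neg_one_zpow, hn.neg_one_zpow]
  · have hm : Even m := Int.not_odd_iff_even.mp fun hm => Int.not_even_iff_odd.mpr hn
      (Int.odd_add.mp h |>.mp hm)
    rw [hm.neg_one_zpow, hn.neg_one_zpow, neg_neg]

theorem LinearMap.BilinForm.apply_eq_neg_of_basis {R M ι : Type*} [CommRing R]
    [AddCommGroup M] [Module R M] (b : Basis ι R M) (B : LinearMap.BilinForm R M)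
    (f : Module.End R M) (h : ∀ i j, B (f (b i)) (b j) = -B (b i) (f (b j))) (x y : M) :
    B (f x) y = -B x (f y) := by
  have hcomp : B.compl₁₂ f LinearMap.id = -B.compl₂ f :=
    LinearMap.ext_basis b b fun i j => by simpa using h i j
  simpa using LinearMap.congr_fun₂ hcomp x y

section SignedShift

variable {K V : Type*} [Field K] [AddCommGroup V] [Module K V] {S : Finset (ℚ × ℚ)}
  (b : Basis {p // p ∈ S} K V)

/-- `v_p ↦ (-1)^(p.1 + p.2 + c) • v_{p + d}`, where the integer `z` stands for `p.1 + p.2`. -/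
def IsSignedShift (d : ℚ × ℚ) (c : ℤ) (e : Module.End K V) : Prop :=
  ∀ (p : ℚ × ℚ) (hp : p ∈ S) (z : ℤ), (z : ℚ) = p.1 + p.2 →
    e (b ⟨p, hp⟩) = if h : p + d ∈ S then ((-1 : K) ^ (z + c)) • b ⟨p + d, h⟩ else 0

variable {b} {d d' : ℚ × ℚ} {c c' : ℤ} {e e' : Module.End K V}

theorem IsSignedShift.apply_apply (he : IsSignedShift b d c e) (he' : IsSignedShift b d' c' e')
    (hd : d.1 + d.2 = 1) {p : ℚ × ℚ} (hp : p ∈ S) {z : ℤ} (hz : (z : ℚ) = p.1 + p.2)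
    (hmid : p + d + d' ∈ S → p + d ∈ S) :
    e' (e (b ⟨p, hp⟩)) = if h : p + d + d' ∈ S then
      ((-1 : K) ^ (2 * z + 1 + c + c')) • b ⟨p + d + d', h⟩ else 0 := by
  have hz₁ : ((z + 1 : ℤ) : ℚ) = (p + d).1 + (p + d).2 := by
    push_cast [Prod.fst_add, Prod.snd_add]; linarith
  rw [he p hp z hz]
  split_ifs with h₁ h₂ h₂
  · rw [map_smul, he' _ h₁ _ hz₁, dif_pos h₂, smul_smul, ← zpow_add₀ (by norm_num)]
    congr 2
    ring
  · rw [map_smul, he' _ h₁ _ hz₁, dif_neg h₂, smul_zero]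
  · exact absurd (hmid h₂) h₁
  · exact map_zero e'

theorem IsSignedShift.commute (he : IsSignedShift b d c e) (he' : IsSignedShift b d' c' e')
    (hd : d.1 + d.2 = 1) (hd' : d'.1 + d'.2 = 1)
    (hclosure : ∀ p ∈ S, p + d + d' ∈ S → p + d ∈ S ∧ p + d' ∈ S)
    (hint : ∀ p ∈ S, ∃ z : ℤ, (z : ℚ) = p.1 + p.2) : Commute e e' := by
  refine b.ext fun ⟨p, hp⟩ => ?_
  obtain ⟨z, hz⟩ := hint p hp
  change e (e' (b ⟨p, hp⟩)) = e' (e (b ⟨p, hp⟩))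
  rw [he'.apply_apply he hd' hp hz fun h => (hclosure p hp (add_right_comm p d' d ▸ h)).2,
    he.apply_apply he' hd hp hz fun h => (hclosure p hp h).1, add_right_comm p d' d,
    add_right_comm _ c' c]

variable {B : LinearMap.BilinForm K V}

theorem IsSignedShift.bilin_apply_basis (he : IsSignedShift b d c e)
    (hsym : ∀ p : ℚ × ℚ, p ∈ S ↔ -p ∈ S)
    (hB : ∀ (p : ℚ × ℚ) (hp : p ∈ S) (q : ℚ × ℚ) (hq : q ∈ S),
      B (b ⟨p, hp⟩) (b ⟨q, hq⟩) = if p = -q then 1 else 0) {p q : ℚ × ℚ}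
    (hp : p ∈ S) (hq : q ∈ S) {z : ℤ} (hz : (z : ℚ) = p.1 + p.2) :
    B (e (b ⟨p, hp⟩)) (b ⟨q, hq⟩) = if p + d = -q then (-1 : K) ^ (z + c) else 0 := by
  rw [he p hp z hz]
  split_ifs with h₁ h₂ h₂
  · rw [map_smul, LinearMap.smul_apply, hB _ h₁ _ hq, if_pos h₂, smul_eq_mul, mul_one]
  · rw [map_smul, LinearMap.smul_apply, hB _ h₁ _ hq, if_neg h₂, smul_zero]
  · exact absurd (h₂ ▸ (hsym q).mp hq) h₁
  · simp

theorem IsSignedShift.apply_eq_neg (he : IsSignedShift b d c e) (hd : d.1 + d.2 = 1)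
    (hsym : ∀ p : ℚ × ℚ, p ∈ S ↔ -p ∈ S)
    (hB : ∀ (p : ℚ × ℚ) (hp : p ∈ S) (q : ℚ × ℚ) (hq : q ∈ S),
      B (b ⟨p, hp⟩) (b ⟨q, hq⟩) = if p = -q then 1 else 0)
    (hint : ∀ p ∈ S, ∃ z : ℤ, (z : ℚ) = p.1 + p.2) (x y : V) :
    B (e x) y = -B x (e y) := by
  have hBsymm : B.IsSymm := (LinearMap.BilinForm.isSymm_iff_basis b).mpr
    fun ⟨p, hp⟩ ⟨q, hq⟩ => by simp only [hB, eq_neg_iff_add_eq_zero, add_comm]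
  refine B.apply_eq_neg_of_basis b e (fun ⟨p, hp⟩ ⟨q, hq⟩ => ?_) x y
  obtain ⟨z, hz⟩ := hint p hp
  obtain ⟨w, hw⟩ := hint q hq
  have hpq : q + d = -p ↔ p + d = -q := by
    simp only [eq_neg_iff_add_eq_zero]
    constructor <;> intro h <;> rw [← h] <;> abel
  rw [hBsymm.eq (b _) (e _), he.bilin_apply_basis hsym hB hp hq hz,
    he.bilin_apply_basis hsym hB hq hp hw]
  by_cases h : p + d = -q
  · rw [if_pos h, if_pos (hpq.mpr h)]
    obtain ⟨h₁, h₂⟩ := Prod.ext_iff.mp h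
    simp only [Prod.fst_add, Prod.snd_add, Prod.fst_neg, Prod.snd_neg] at h₁ h₂
    have hzw : z + w = -1 := by exact_mod_cast (by linarith : (z + w : ℚ) = -1)
    exact neg_one_zpow_eq_neg_of_odd_add ⟨c - 1, by omega⟩
  · rw [if_neg h, if_neg (mt hpq.mp h), neg_zero]

end SignedShift

theorem stmt9_general {K V : Type*} [Field K] [AddCommGroup V] [Module K V]
    (S : Finset (ℚ × ℚ))
    (hsym : ∀ p : ℚ × ℚ, p ∈ S ↔ (-p.1, -p.2) ∈ S)
    (hclosure : ∀ i j : ℚ, (i, j) ∈ S → (i + 1, j + 1) ∈ S →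
      (i + 1, j) ∈ S ∧ (i, j + 1) ∈ S)
    (hint : ∀ p ∈ S, ∃ z : ℤ, (z : ℚ) = p.1 + p.2)
    (b : Module.Basis {p : ℚ × ℚ // p ∈ S} K V)
    (B : LinearMap.BilinForm K V)
    (hB : ∀ (p : ℚ × ℚ) (hp : p ∈ S) (q : ℚ × ℚ) (hq : q ∈ S),
      B (b ⟨p, hp⟩) (b ⟨q, hq⟩) = if p.1 = -q.1 ∧ p.2 = -q.2 then 1 else 0)
    (e1 e2 : Module.End K V)
    (he1 : ∀ (p : ℚ × ℚ) (hp : p ∈ S) (z : ℤ), (z : ℚ) = p.1 + p.2 →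
      e1 (b ⟨p, hp⟩) = if h : (p.1 + 1, p.2) ∈ S then
        ((-1 : K) ^ z) • b ⟨(p.1 + 1, p.2), h⟩ else 0)
    (he2 : ∀ (p : ℚ × ℚ) (hp : p ∈ S) (z : ℤ), (z : ℚ) = p.1 + p.2 →
      e2 (b ⟨p, hp⟩) = if h : (p.1, p.2 + 1) ∈ S then
        ((-1 : K) ^ (z + 1)) • b ⟨(p.1, p.2 + 1), h⟩ else 0) :
    Commute e1 e2 ∧ (∀ x y, B (e1 x) y = - B x (e1 y)) ∧
      (∀ x y, B (e2 x) y = - B x (e2 y)) := by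
  have hB' : ∀ (p : ℚ × ℚ) (hp : p ∈ S) (q : ℚ × ℚ) (hq : q ∈ S),
      B (b ⟨p, hp⟩) (b ⟨q, hq⟩) = if p = -q then 1 else 0 := fun p hp q hq => by
    simp only [hB, Prod.ext_iff, Prod.fst_neg, Prod.snd_neg]
  have hE1 : IsSignedShift b (1, 0) 0 e1 := fun ⟨i, j⟩ hp z hz => by
    simp only [he1 (i, j) hp z hz, Prod.mk_add_mk, add_zero]
  have hE2 : IsSignedShift b (0, 1) 1 e2 := fun ⟨i, j⟩ hp z hz => by
    simp only [he2 (i, j) hp z hz, Prod.mk_add_mk, add_zero]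
  have hclosure' : ∀ p ∈ S, p + (1, 0) + (0, 1) ∈ S → p + (1, 0) ∈ S ∧ p + (0, 1) ∈ S := by
    rintro ⟨i, j⟩ hp
    simpa only [Prod.mk_add_mk, add_zero] using hclosure i j hp
  exact ⟨hE1.commute hE2 (by norm_num) (by norm_num) hclosure' hint,
    hE1.apply_eq_neg (by norm_num) hsym hB' hint, hE2.apply_eq_neg (by norm_num) hsym hB' hint⟩

theorem stmt9 {K V : Type*} [Field K] [CharZero K] [AddCommGroup V] [Module K V]
    (S : Finset (ℚ × ℚ))
    (hsym : ∀ p : ℚ × ℚ, p ∈ S ↔ (-p.1, -p.2) ∈ S)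
    (hclosure : ∀ i j : ℚ, (i, j) ∈ S → (i + 1, j + 1) ∈ S →
      (i + 1, j) ∈ S ∧ (i, j + 1) ∈ S)
    (hint : ∀ p ∈ S, ∃ z : ℤ, (z : ℚ) = p.1 + p.2)
    (b : Module.Basis {p : ℚ × ℚ // p ∈ S} K V)
    (B : LinearMap.BilinForm K V)
    (hB : ∀ (p : ℚ × ℚ) (hp : p ∈ S) (q : ℚ × ℚ) (hq : q ∈ S),
      B (b ⟨p, hp⟩) (b ⟨q, hq⟩) = if p.1 = -q.1 ∧ p.2 = -q.2 then 1 else 0)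
    (e1 e2 : Module.End K V)
    (he1 : ∀ (p : ℚ × ℚ) (hp : p ∈ S) (z : ℤ), (z : ℚ) = p.1 + p.2 →
      e1 (b ⟨p, hp⟩) = if h : (p.1 + 1, p.2) ∈ S then
        ((-1 : K) ^ z) • b ⟨(p.1 + 1, p.2), h⟩ else 0)
    (he2 : ∀ (p : ℚ × ℚ) (hp : p ∈ S) (z : ℤ), (z : ℚ) = p.1 + p.2 →
      e2 (b ⟨p, hp⟩) = if h : (p.1, p.2 + 1) ∈ S then
        ((-1 : K) ^ (z + 1)) • b ⟨(p.1, p.2 + 1), h⟩ else 0) :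
    Commute e1 e2 ∧ (∀ x y, B (e1 x) y = - B x (e1 y)) ∧
      (∀ x y, B (e2 x) y = - B x (e2 y)) :=
  stmt9_general S hsym hclosure hint b B hB e1 e2 he1 he2
end

section
/- Let V be a vector space over a field of characteristic zero with basis indexed by an m × n rectangle and e1, e2 the shift operators as above. Then the centralizer of {e1, e2} in End(V) has dimension mn, with basis {e1^a e2^b : 0 ≤ a < m, 0 ≤ b < n}. -/
/-!
The monomials `e1 ^ a * e2 ^ c` carry the corner vector `v₀ = b (0, 0)` to the basis vector
`b (a, c)`, so `v₀` is a cyclic vector for the commutative family of monomials. Evaluation at `v₀`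
therefore makes the monomials linearly independent, and an endomorphism commuting with `e1` and
`e2` is determined by its value at `v₀`; writing `x v₀ = ∑ c_p b p` gives
`x = ∑ c_p (e1 ^ p.1 * e2 ^ p.2)`.
-/

namespace Module.End

section CyclicVector

variable {R V ι : Type*} [CommSemiring R] [AddCommMonoid V] [Module R V]
  {f : ι → Module.End R V} {b : Module.Basis ι R V} {v : V}

theorem linearIndependent_of_apply_eq_basis (hf : ∀ i, f i v = b i) :
    LinearIndependent R f :=
  LinearIndependent.of_comp (LinearMap.applyₗ v) <| by
    convert b.linearIndependent
    exact funext hf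

theorem eq_of_forall_commute_of_apply_eq (hf : ∀ i, f i v = b i) {x y : Module.End R V}
    (hx : ∀ i, Commute x (f i)) (hy : ∀ i, Commute y (f i)) (hxy : x v = y v) : x = y :=
  b.ext fun i => by
    rw [← hf i, ← mul_apply, (hx i).eq, mul_apply, hxy, ← mul_apply, ← (hy i).eq, mul_apply]

theorem mem_span_range_of_forall_commute [Fintype ι] (hf : ∀ i, f i v = b i)
    (hcomm : ∀ i j, Commute (f i) (f j)) {x : Module.End R V} (hx : ∀ i, Commute x (f i)) :
    x ∈ Submodule.span R (Set.range f) := by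
  set y := ∑ j, b.repr (x v) j • f j
  have hy : ∀ i, Commute y (f i) := fun i =>
    Commute.sum_left _ _ _ fun j _ => (hcomm j i).smul_left _
  have hyv : y v = x v := by
    simp only [y, LinearMap.sum_apply, LinearMap.smul_apply, hf, b.sum_repr]
  rw [eq_of_forall_commute_of_apply_eq hf hx hy hyv.symm]
  exact Submodule.sum_mem _ fun j _ => Submodule.smul_mem _ _ (Submodule.subset_span ⟨j, rfl⟩)

end CyclicVector

end Module.End

section GridShifts

open Module.End

variable {R V : Type*} [Semiring R] [AddCommMonoid V] [Module R V] {m n : ℕ}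
  {b : Module.Basis (Fin m × Fin n) R V} {e1 e2 : Module.End R V}

theorem commute_of_shifts
    (he1 : ∀ p : Fin m × Fin n, e1 (b p) =
      if h : (p.1 : ℕ) + 1 < m then b (⟨(p.1 : ℕ) + 1, h⟩, p.2) else 0)
    (he2 : ∀ p : Fin m × Fin n, e2 (b p) =
      if h : (p.2 : ℕ) + 1 < n then b (p.1, ⟨(p.2 : ℕ) + 1, h⟩) else 0) :
    Commute e1 e2 := by
  refine b.ext fun p => ?_
  rw [mul_apply, mul_apply, he1 p, he2 p]
  by_cases h1 : (p.1 : ℕ) + 1 < m <;> by_cases h2 : (p.2 : ℕ) + 1 < n <;> simp [h1, h2, he1, he2]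

theorem pow_apply_of_shift_fst
    (he1 : ∀ p : Fin m × Fin n, e1 (b p) =
      if h : (p.1 : ℕ) + 1 < m then b (⟨(p.1 : ℕ) + 1, h⟩, p.2) else 0)
    (hm : 0 < m) (l : Fin n) (a : ℕ) (ha : a < m) :
    (e1 ^ a) (b (⟨0, hm⟩, l)) = b (⟨a, ha⟩, l) := by
  induction a with
  | zero => rfl
  | succ a ih => rw [pow_succ', mul_apply, ih (by omega), he1, dif_pos ha]

theorem pow_apply_of_shift_snd
    (he2 : ∀ p : Fin m × Fin n, e2 (b p) =
      if h : (p.2 : ℕ) + 1 < n then b (p.1, ⟨(p.2 : ℕ) + 1, h⟩) else 0)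
    (hn : 0 < n) (k : Fin m) (c : ℕ) (hc : c < n) :
    (e2 ^ c) (b (k, ⟨0, hn⟩)) = b (k, ⟨c, hc⟩) := by
  induction c with
  | zero => rfl
  | succ c ih => rw [pow_succ', mul_apply, ih (by omega), he2, dif_pos hc]

theorem monomial_apply_corner_of_shifts
    (he1 : ∀ p : Fin m × Fin n, e1 (b p) =
      if h : (p.1 : ℕ) + 1 < m then b (⟨(p.1 : ℕ) + 1, h⟩, p.2) else 0)
    (he2 : ∀ p : Fin m × Fin n, e2 (b p) =
      if h : (p.2 : ℕ) + 1 < n then b (p.1, ⟨(p.2 : ℕ) + 1, h⟩) else 0)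
    (hm : 0 < m) (hn : 0 < n) (p : Fin m × Fin n) :
    (e1 ^ (p.1 : ℕ) * e2 ^ (p.2 : ℕ)) (b (⟨0, hm⟩, ⟨0, hn⟩)) = b p := by
  rw [mul_apply, pow_apply_of_shift_snd he2 hn _ _ p.2.isLt,
    pow_apply_of_shift_fst he1 hm _ _ p.1.isLt]

end GridShifts

theorem stmt11_general {K V : Type*} [Field K] [AddCommGroup V] [Module K V]
    (m n : ℕ) (hm : 0 < m) (hn : 0 < n)
    (b : Module.Basis (Fin m × Fin n) K V)
    (e1 e2 : Module.End K V)
    (he1 : ∀ p : Fin m × Fin n, e1 (b p) =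
      if h : (p.1 : ℕ) + 1 < m then b (⟨(p.1 : ℕ) + 1, h⟩, p.2) else 0)
    (he2 : ∀ p : Fin m × Fin n, e2 (b p) =
      if h : (p.2 : ℕ) + 1 < n then b (p.1, ⟨(p.2 : ℕ) + 1, h⟩) else 0) :
    LinearIndependent K (fun p : Fin m × Fin n => e1 ^ (p.1 : ℕ) * e2 ^ (p.2 : ℕ)) ∧
    {x : Module.End K V | Commute x e1 ∧ Commute x e2} =
      ↑(Submodule.span K
        (Set.range (fun p : Fin m × Fin n => e1 ^ (p.1 : ℕ) * e2 ^ (p.2 : ℕ)))) ∧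
    Module.finrank K
      ↥(Submodule.span K
        (Set.range (fun p : Fin m × Fin n => e1 ^ (p.1 : ℕ) * e2 ^ (p.2 : ℕ)))) = m * n := by
  have hcorner := monomial_apply_corner_of_shifts he1 he2 hm hn
  have h12 := commute_of_shifts he1 he2
  have hindep := Module.End.linearIndependent_of_apply_eq_basis hcorner
  have he1_mem : e1 ∈ Subalgebra.centralizer K {e1, e2} := by
    simp [Subalgebra.mem_centralizer_iff, h12.eq]
  have he2_mem : e2 ∈ Subalgebra.centralizer K {e1, e2} := by
    simp [Subalgebra.mem_centralizer_iff, h12.eq]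
  refine ⟨hindep, ?_, by rw [finrank_span_eq_card hindep, Fintype.card_prod]; simp⟩
  apply subset_antisymm
  · rintro x ⟨hx1, hx2⟩
    refine Module.End.mem_span_range_of_forall_commute hcorner ?_ fun p => ?_
    · exact fun p q =>
        ((Commute.pow_pow_self e1 _ _).mul_right (h12.pow_pow _ _)).mul_left
          ((h12.pow_pow _ _).symm.mul_right (Commute.pow_pow_self e2 _ _))
    · exact (hx1.pow_right _).mul_right (hx2.pow_right _)
  · intro y hy
    have hy_mem : y ∈ Subalgebra.centralizer K {e1, e2} :=
      (Submodule.span_le (p := (Subalgebra.centralizer K {e1, e2}).toSubmodule)).mpr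
        (Set.range_subset_iff.mpr fun p =>
          (Subalgebra.mem_toSubmodule _).mpr (mul_mem (pow_mem he1_mem _) (pow_mem he2_mem _))) hy
    rw [Subalgebra.mem_centralizer_iff] at hy_mem
    exact ⟨(hy_mem e1 (by simp)).symm, (hy_mem e2 (by simp)).symm⟩

theorem stmt11 {K V : Type*} [Field K] [CharZero K] [AddCommGroup V] [Module K V]
    (m n : ℕ) (hm : 0 < m) (hn : 0 < n)
    (b : Module.Basis (Fin m × Fin n) K V)
    (e1 e2 : Module.End K V)
    (he1 : ∀ p : Fin m × Fin n, e1 (b p) =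
      if h : (p.1 : ℕ) + 1 < m then b (⟨(p.1 : ℕ) + 1, h⟩, p.2) else 0)
    (he2 : ∀ p : Fin m × Fin n, e2 (b p) =
      if h : (p.2 : ℕ) + 1 < n then b (p.1, ⟨(p.2 : ℕ) + 1, h⟩) else 0) :
    LinearIndependent K (fun p : Fin m × Fin n => e1 ^ (p.1 : ℕ) * e2 ^ (p.2 : ℕ)) ∧
    {x : Module.End K V | Commute x e1 ∧ Commute x e2} =
      ↑(Submodule.span K
        (Set.range (fun p : Fin m × Fin n => e1 ^ (p.1 : ℕ) * e2 ^ (p.2 : ℕ)))) ∧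
    Module.finrank K
      ↥(Submodule.span K
        (Set.range (fun p : Fin m × Fin n => e1 ^ (p.1 : ℕ) * e2 ^ (p.2 : ℕ)))) = m * n :=
  stmt11_general m n hm hn b e1 e2 he1 he2
end

section
/- Let V be a finite-dimensional vector space over a field of characteristic zero with basis indexed by the nodes of a connected skew-diagram S ⊆ ℤ × ℤ whose leftmost column has top square (i0, j0+k) and bottom square (i0, j0), and whose rightmost column has top square (i1, j1+l) and bottom square (i1, j1), with j0 > j1 and j0 + k > j1 + l and k ≤ l. Let e1, e2 be the associated shift operators. Then the endomorphism x defined by x(v_{(i0,j)}) = v_{(i1, j1+l−j0−k+j)} for j0 ≤ j ≤ j0+k and x = 0 on all other basis vectors satisfies [x, e1] = [x, e2] = 0, and x is an eigenvector of the bigrading with second coordinate q = j1 + l − j0 − k < 0. -/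
/-!
The operator `x` carries the left column of `S` onto the top part of the right column, aligning
the top squares. Since `x` vanishes off the left column and `e₁` vanishes on the right one, both
`x e₁` and `e₁ x` are zero. On the left column, `e₂` and `x` commute because the top squares are
aligned and the left column is no taller than the right one, so that a vertical step stays inside
the left column exactly when its image stays inside the right one. Finally `x` moves every basis
vector by the vector `(i₁ - i₀, q)`, which gives its weights for `h₁` and `h₂`.
-/

open Module

section

variable {K V : Type*} [Field K] [AddCommGroup V] [Module K V]

theorem Module.End.mul_sub_mul_eq_smul_of_basis {ι : Type*} (b : Basis ι K V)
    {h f : End K V} (w : ι → K) (c : K) (hh : ∀ i, h (b i) = w i • b i)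
    (hf : ∀ i, h (f (b i)) = (w i + c) • f (b i)) : h * f - f * h = c • f :=
  b.ext fun i => by
    simp only [LinearMap.sub_apply, End.mul_apply, LinearMap.smul_apply, hh, hf, map_smul,
      add_smul, add_sub_cancel_left]

def IsColumnTransfer {S : Finset (ℤ × ℤ)} (b : Basis {p : ℤ × ℤ // p ∈ S} K V)
    (i₀ i₁ q : ℤ) (x : End K V) : Prop :=
  ∀ (p : ℤ × ℤ) (hp : p ∈ S), x (b ⟨p, hp⟩) =
    if p.1 = i₀ then (if h : (i₁, q + p.2) ∈ S then b ⟨(i₁, q + p.2), h⟩ else 0) else 0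

namespace IsColumnTransfer

variable {S : Finset (ℤ × ℤ)} {b : Basis {p : ℤ × ℤ // p ∈ S} K V} {i₀ i₁ q : ℤ} {x : End K V}

theorem mul_sub_mul_eq_smul (hx : IsColumnTransfer b i₀ i₁ q x) {h : End K V}
    (w : ℤ × ℤ → K) (c : K) (hh : ∀ (p : ℤ × ℤ) (hp : p ∈ S), h (b ⟨p, hp⟩) = w p • b ⟨p, hp⟩)
    (hw : ∀ j, w (i₁, q + j) = w (i₀, j) + c) : h * x - x * h = c • x := by
  refine End.mul_sub_mul_eq_smul_of_basis b (fun p => w p) c (fun p => hh p.1 p.2) ?_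
  rintro ⟨⟨i, j⟩, hp⟩
  rw [hx]
  split_ifs with hi hmem
  · obtain rfl : i = i₀ := hi
    rw [hh, hw]
  · rw [map_zero, smul_zero]
  · rw [map_zero, smul_zero]

theorem mul_eq_zero_of_horizontalShift (hx : IsColumnTransfer b i₀ i₁ q x) {e : End K V}
    (hrange : ∀ p ∈ S, i₀ ≤ p.1)
    (he : ∀ (p : ℤ × ℤ) (hp : p ∈ S),
      e (b ⟨p, hp⟩) = if h : (p.1 + 1, p.2) ∈ S then b ⟨(p.1 + 1, p.2), h⟩ else 0) :
    x * e = 0 := by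
  refine b.ext fun ⟨p, hp⟩ => ?_
  rw [End.mul_apply, he, LinearMap.zero_apply]
  split_ifs with hs
  · rw [hx, if_neg (by have := hrange _ hp; omega)]
  · exact map_zero x

theorem horizontalShift_mul_eq_zero (hx : IsColumnTransfer b i₀ i₁ q x) {e : End K V}
    (hrange : ∀ p ∈ S, p.1 ≤ i₁)
    (he : ∀ (p : ℤ × ℤ) (hp : p ∈ S),
      e (b ⟨p, hp⟩) = if h : (p.1 + 1, p.2) ∈ S then b ⟨(p.1 + 1, p.2), h⟩ else 0) :
    e * x = 0 := by
  refine b.ext fun ⟨p, hp⟩ => ?_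
  rw [End.mul_apply, hx, LinearMap.zero_apply]
  split_ifs with hi hs
  · rw [he, dif_neg fun hs' => by have := hrange _ hs'; simp only at this; omega]
  all_goals exact map_zero e

theorem commute_verticalShift (hx : IsColumnTransfer b i₀ i₁ q x) {e : End K V}
    {j₀ j₁ k l : ℤ} (hleft : ∀ j : ℤ, (i₀, j) ∈ S ↔ j₀ ≤ j ∧ j ≤ j₀ + k)
    (hright : ∀ j : ℤ, (i₁, j) ∈ S ↔ j₁ ≤ j ∧ j ≤ j₁ + l) (hq : j₁ + l = q + j₀ + k)
    (hkl : k ≤ l)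
    (he : ∀ (p : ℤ × ℤ) (hp : p ∈ S),
      e (b ⟨p, hp⟩) = if h : (p.1, p.2 + 1) ∈ S then b ⟨(p.1, p.2 + 1), h⟩ else 0) :
    Commute x e := by
  refine b.ext fun ⟨⟨i, j⟩, hp⟩ => ?_
  rw [End.mul_apply, End.mul_apply, he, hx]
  by_cases hi : i = i₀
  · subst hi
    have hj := (hleft j).mp hp
    have hstep : (i, j + 1) ∈ S ↔ (i₁, q + j + 1) ∈ S := by rw [hleft, hright]; omega
    rw [if_pos rfl, dif_pos ((hright _).mpr ⟨by omega, by omega⟩), he]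
    by_cases hs : (i, j + 1) ∈ S
    · rw [dif_pos hs, hx, if_pos rfl]
      simp only [add_assoc]
    · rw [dif_neg hs, map_zero, dif_neg (hstep.not.mp hs)]
  · rw [if_neg hi, map_zero]
    split_ifs with hs
    · rw [hx, if_neg hi]
    · exact map_zero x

end IsColumnTransfer

end

theorem stmt14_general {K V : Type*} [Field K] [AddCommGroup V] [Module K V]
    (S : Finset (ℤ × ℤ))
    (i0 i1 j0 j1 kk ll : ℤ)
    (hrange : ∀ p ∈ S, i0 ≤ p.1 ∧ p.1 ≤ i1)
    (hleft : ∀ j : ℤ, (i0, j) ∈ S ↔ j0 ≤ j ∧ j ≤ j0 + kk)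
    (hright : ∀ j : ℤ, (i1, j) ∈ S ↔ j1 ≤ j ∧ j ≤ j1 + ll)
    (hjkl : j1 + ll < j0 + kk) (hkl : kk ≤ ll)
    (b : Module.Basis {p : ℤ × ℤ // p ∈ S} K V)
    (e1 e2 h1 h2 x : Module.End K V)
    (he1 : ∀ (p : ℤ × ℤ) (hp : p ∈ S),
      e1 (b ⟨p, hp⟩) = if h : (p.1 + 1, p.2) ∈ S then b ⟨(p.1 + 1, p.2), h⟩ else 0)
    (he2 : ∀ (p : ℤ × ℤ) (hp : p ∈ S),
      e2 (b ⟨p, hp⟩) = if h : (p.1, p.2 + 1) ∈ S then b ⟨(p.1, p.2 + 1), h⟩ else 0)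
    (hh1 : ∀ (p : ℤ × ℤ) (hp : p ∈ S), h1 (b ⟨p, hp⟩) = (p.1 : K) • b ⟨p, hp⟩)
    (hh2 : ∀ (p : ℤ × ℤ) (hp : p ∈ S), h2 (b ⟨p, hp⟩) = (p.2 : K) • b ⟨p, hp⟩)
    (hx : ∀ (p : ℤ × ℤ) (hp : p ∈ S), x (b ⟨p, hp⟩) =
      if p.1 = i0 then
        (if h : (i1, j1 + ll - j0 - kk + p.2) ∈ S then
          b ⟨(i1, j1 + ll - j0 - kk + p.2), h⟩ else 0)
      else 0) :
    Commute x e1 ∧ Commute x e2 ∧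
      h1 * x - x * h1 = ((i1 - i0 : ℤ) : K) • x ∧
      h2 * x - x * h2 = ((j1 + ll - j0 - kk : ℤ) : K) • x ∧
      j1 + ll - j0 - kk < 0 := by
  have hx : IsColumnTransfer b i0 i1 (j1 + ll - j0 - kk) x := hx
  refine ⟨?_, hx.commute_verticalShift hleft hright (by ring) hkl he2, ?_, ?_, by omega⟩
  · exact (hx.mul_eq_zero_of_horizontalShift (fun p hp => (hrange p hp).1) he1).trans
      (hx.horizontalShift_mul_eq_zero (fun p hp => (hrange p hp).2) he1).symm
  · exact hx.mul_sub_mul_eq_smul (fun p => (p.1 : K)) _ hh1 fun j => by push_cast; ring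
  · exact hx.mul_sub_mul_eq_smul (fun p => (p.2 : K)) _ hh2 fun j => by push_cast; ring

theorem stmt14 {K V : Type*} [Field K] [CharZero K] [AddCommGroup V] [Module K V]
    (S : Finset (ℤ × ℤ))
    (hclosure : ∀ i j : ℤ, (i, j) ∈ S → (i + 1, j + 1) ∈ S →
      (i + 1, j) ∈ S ∧ (i, j + 1) ∈ S)
    (hconn : ∀ p ∈ S, ∀ q ∈ S, Relation.ReflTransGen
      (fun u v : ℤ × ℤ => u ∈ S ∧ v ∈ S ∧ (u.1 - v.1) ^ 2 + (u.2 - v.2) ^ 2 = 1) p q)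
    (i0 i1 j0 j1 kk ll : ℤ) (hkk : 0 ≤ kk) (hll : 0 ≤ ll)
    (hrange : ∀ p ∈ S, i0 ≤ p.1 ∧ p.1 ≤ i1)
    (hleft : ∀ j : ℤ, (i0, j) ∈ S ↔ j0 ≤ j ∧ j ≤ j0 + kk)
    (hright : ∀ j : ℤ, (i1, j) ∈ S ↔ j1 ≤ j ∧ j ≤ j1 + ll)
    (hjj : j1 < j0) (hjkl : j1 + ll < j0 + kk) (hkl : kk ≤ ll)
    (b : Module.Basis {p : ℤ × ℤ // p ∈ S} K V)
    (e1 e2 h1 h2 x : Module.End K V)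
    (he1 : ∀ (p : ℤ × ℤ) (hp : p ∈ S),
      e1 (b ⟨p, hp⟩) = if h : (p.1 + 1, p.2) ∈ S then b ⟨(p.1 + 1, p.2), h⟩ else 0)
    (he2 : ∀ (p : ℤ × ℤ) (hp : p ∈ S),
      e2 (b ⟨p, hp⟩) = if h : (p.1, p.2 + 1) ∈ S then b ⟨(p.1, p.2 + 1), h⟩ else 0)
    (hh1 : ∀ (p : ℤ × ℤ) (hp : p ∈ S), h1 (b ⟨p, hp⟩) = (p.1 : K) • b ⟨p, hp⟩)
    (hh2 : ∀ (p : ℤ × ℤ) (hp : p ∈ S), h2 (b ⟨p, hp⟩) = (p.2 : K) • b ⟨p, hp⟩)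
    (hx : ∀ (p : ℤ × ℤ) (hp : p ∈ S), x (b ⟨p, hp⟩) =
      if p.1 = i0 then
        (if h : (i1, j1 + ll - j0 - kk + p.2) ∈ S then
          b ⟨(i1, j1 + ll - j0 - kk + p.2), h⟩ else 0)
      else 0) :
    Commute x e1 ∧ Commute x e2 ∧
      h1 * x - x * h1 = ((i1 - i0 : ℤ) : K) • x ∧
      h2 * x - x * h2 = ((j1 + ll - j0 - kk : ℤ) : K) • x ∧
      j1 + ll - j0 - kk < 0 :=
  stmt14_general S i0 i1 j0 j1 kk ll hrange hleft hright hjkl hkl b e1 e2 h1 h2 x he1 he2 hh1 hh2 hx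
end

section
/- Let S ⊆ (1/2 + ℤ) × (1/2 + ℤ) be a finite, nonempty, centrally symmetric set of nodes of a connected skew-graph (i.e., closed under the skew condition and connected via unit horizontal/vertical steps). Then (1/2, 1/2) ∈ S. -/
namespace Stmt15

def Half (a : ℚ) : Prop := ∃ z : ℤ, a = z + 1/2

def Rel (S : Finset (ℚ × ℚ)) : ℚ × ℚ → ℚ × ℚ → Prop :=
  fun u v => u ∈ S ∧ v ∈ S ∧ (u.1 - v.1) ^ 2 + (u.2 - v.2) ^ 2 = 1

inductive W (S : Finset (ℚ × ℚ)) : ℕ → ℚ × ℚ → ℚ × ℚ → Prop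
  | refl (p : ℚ × ℚ) : W S 0 p p
  | head {p q r : ℚ × ℚ} {n : ℕ} : Rel S p q → W S n q r → W S (n + 1) p r

variable {S : Finset (ℚ × ℚ)}

lemma W.snoc {n : ℕ} {u v w : ℚ × ℚ} (h : W S n u v) (h2 : Rel S v w) :
    W S (n + 1) u w := by
  induction h with
  | refl p => exact W.head h2 (W.refl w)
  | head hr _ ih => exact W.head hr (ih h2)

lemma exists_W {u v : ℚ × ℚ} (h : Relation.ReflTransGen (Rel S) u v) : ∃ n, W S n u v := by
  induction h with
  | refl => exact ⟨0, W.refl u⟩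
  | tail _ h2 ih => obtain ⟨n, hw⟩ := ih; exact ⟨n + 1, hw.snoc h2⟩

lemma W.mem_right {n : ℕ} {u v : ℚ × ℚ} (h : W S n u v) (hu : u ∈ S) : v ∈ S := by
  induction h with
  | refl _ => exact hu
  | head hr _ ih => exact ih hr.2.1

lemma step_shape (hhalf : ∀ p ∈ S, Half p.1 ∧ Half p.2) {u v : ℚ × ℚ} (h : Rel S u v) :
    (v.1 = u.1 ∧ (v.2 = u.2 + 1 ∨ v.2 = u.2 - 1)) ∨
    (v.2 = u.2 ∧ (v.1 = u.1 + 1 ∨ v.1 = u.1 - 1)) := by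
  obtain ⟨⟨a1, ha1⟩, ⟨a2, ha2⟩⟩ := hhalf u h.1
  obtain ⟨⟨b1, hb1⟩, ⟨b2, hb2⟩⟩ := hhalf v h.2.1
  have e1 : u.1 - v.1 = ((a1 - b1 : ℤ) : ℚ) := by push_cast; rw [ha1, hb1]; ring
  have e2 : u.2 - v.2 = ((a2 - b2 : ℤ) : ℚ) := by push_cast; rw [ha2, hb2]; ring
  have key : (a1 - b1) ^ 2 + (a2 - b2) ^ 2 = 1 := by
    have := h.2.2
    rw [e1, e2] at this
    exact_mod_cast this
  set d1 := a1 - b1 with hd1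
  set d2 := a2 - b2 with hd2
  have c1 : d1 ≤ 1 := by nlinarith [sq_nonneg d2]
  have c2 : -1 ≤ d1 := by nlinarith [sq_nonneg d2]
  have c3 : d2 ≤ 1 := by nlinarith [sq_nonneg d1]
  have c4 : -1 ≤ d2 := by nlinarith [sq_nonneg d1]
  have hcases : (d1 = 0 ∧ (d2 = 1 ∨ d2 = -1)) ∨ (d2 = 0 ∧ (d1 = 1 ∨ d1 = -1)) := by
    interval_cases d1 <;> interval_cases d2 <;> omega
  rcases hcases with ⟨h1, h2⟩ | ⟨h1, h2⟩
  · left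
    constructor
    · rw [h1] at e1; push_cast at e1; linarith
    · rcases h2 with h2 | h2 <;> [right; left] <;> (rw [h2] at e2; push_cast at e2; linarith)
  · right
    constructor
    · rw [h1] at e2; push_cast at e2; linarith
    · rcases h2 with h2 | h2 <;> [right; left] <;> (rw [h2] at e1; push_cast at e1; linarith)


/-- half-integer trichotomy: if `a - c` is a positive difference of half-integers then `c+1 ≤ a`. -/
lemma half_gap {a c : ℚ} (ha : Half a) (hc : Half c) (h : c < a) : c + 1 ≤ a := by
  obtain ⟨z1, hz1⟩ := ha
  obtain ⟨z2, hz2⟩ := hc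
  have : (z2 : ℚ) < z1 := by rw [hz1, hz2] at h; linarith
  have : z2 < z1 := by exact_mod_cast this
  have : (z2 : ℚ) + 1 ≤ z1 := by exact_mod_cast this
  rw [hz1, hz2]; linarith

lemma cut1 (hhalf : ∀ p ∈ S, Half p.1 ∧ Half p.2) {n : ℕ} {u v : ℚ × ℚ} {c : ℚ}
    (hc : Half c) (hw : W S n u v) (hu : c + 1 ≤ u.1) (hv : v.1 ≤ c) :
    ∃ (y : ℚ) (m1 m2 : ℕ), m1 + 1 + m2 = n ∧ W S m1 u (c + 1, y) ∧
      Rel S (c + 1, y) (c, y) ∧ W S m2 (c, y) v := by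
  revert hu hv
  induction hw with
  | refl p => intro hu hv; exact absurd hv (by push_neg; linarith)
  | @head p q r m hr hw ih =>
    intro hu hv
    rcases le_or_gt q.1 c with hq | hq
    · -- crossing at this very step
      rcases step_shape hhalf hr with ⟨e1, _⟩ | ⟨e2, e1⟩
      · exact absurd hq (by push_neg; rw [e1]; linarith)
      · have hq1 : q.1 = p.1 - 1 := by
          rcases e1 with e1 | e1
          · exact absurd hq (by push_neg; rw [e1]; linarith)
          · exact e1
        have hp1 : p.1 = c + 1 := by
          have : p.1 - 1 ≤ c := by rw [← hq1]; exact hq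
          linarith
        have hq1' : q.1 = c := by rw [hq1, hp1]; ring
        have hpp : (c + 1, p.2) = p := by
          rw [← hp1]
        have hqq : (c, p.2) = q := by
          rw [← hq1', ← e2]
        refine ⟨p.2, 0, m, by omega, ?_, ?_, ?_⟩
        · rw [hpp]; exact W.refl p
        · rw [hpp, hqq]; exact hr
        · rw [hqq]; exact hw
    · have hq' : c + 1 ≤ q.1 := half_gap (hhalf q hr.2.1).1 hc hq
      obtain ⟨y, m1, m2, hm, w1, hmid, w2⟩ := ih hq' hv
      exact ⟨y, m1 + 1, m2, by omega, W.head hr w1, hmid, w2⟩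

lemma cut2 (hhalf : ∀ p ∈ S, Half p.1 ∧ Half p.2) {n : ℕ} {u v : ℚ × ℚ} {c : ℚ}
    (hc : Half c) (hw : W S n u v) (hu : c + 1 ≤ u.2) (hv : v.2 ≤ c) :
    ∃ (x : ℚ) (m1 m2 : ℕ), m1 + 1 + m2 = n ∧ W S m1 u (x, c + 1) ∧
      Rel S (x, c + 1) (x, c) ∧ W S m2 (x, c) v := by
  revert hu hv
  induction hw with
  | refl p => intro hu hv; exact absurd hv (by push_neg; linarith)
  | @head p q r m hr hw ih =>
    intro hu hv
    rcases le_or_gt q.2 c with hq | hq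
    · rcases step_shape hhalf hr with ⟨e2, e1⟩ | ⟨e1, _⟩
      swap
      · exact absurd hq (by push_neg; rw [e1]; linarith)
      · have hq1 : q.2 = p.2 - 1 := by
          rcases e1 with e1 | e1
          · exact absurd hq (by push_neg; rw [e1]; linarith)
          · exact e1
        have hp1 : p.2 = c + 1 := by
          have : p.2 - 1 ≤ c := by rw [← hq1]; exact hq
          linarith
        have hq1' : q.2 = c := by rw [hq1, hp1]; ring
        have hpp : (p.1, c + 1) = p := by rw [← hp1]
        have hqq : (p.1, c) = q := by rw [← hq1', ← e2]
        refine ⟨p.1, 0, m, by omega, ?_, ?_, ?_⟩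
        · rw [hpp]; exact W.refl p
        · rw [hpp, hqq]; exact hr
        · rw [hqq]; exact hw
    · have hq' : c + 1 ≤ q.2 := half_gap (hhalf q hr.2.1).2 hc hq
      obtain ⟨x, m1, m2, hm, w1, hmid, w2⟩ := ih hq' hv
      exact ⟨x, m1 + 1, m2, by omega, W.head hr w1, hmid, w2⟩


/-- squeeze: u ≤ a ≤ u + 1 strictly below u+1, halves, gives a = u -/
lemma half_squeeze {a u : ℚ} (ha : Half a) (hu : Half u) (h1 : u ≤ a) (h2 : a < u + 1) :
    a = u := by
  rcases eq_or_lt_of_le h1 with h | h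
  · exact h.symm
  · exact absurd (half_gap ha hu h) (by push_neg; linarith)

lemma rect (hhalf : ∀ p ∈ S, Half p.1 ∧ Half p.2)
    (hclosure : ∀ i j : ℚ, (i, j) ∈ S → (i + 1, j + 1) ∈ S →
      (i + 1, j) ∈ S ∧ (i, j + 1) ∈ S) :
    ∀ n : ℕ, ∀ u v r : ℚ × ℚ, W S n u v → u ∈ S → Half r.1 → Half r.2 →
      u.1 ≤ r.1 → r.1 ≤ v.1 → u.2 ≤ r.2 → r.2 ≤ v.2 → r ∈ S := by
  intro n
  induction n using Nat.strong_induction_on with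
  | _ n IH =>
  intro u v r hw hu hr1 hr2 hur1 hrv1 hur2 hrv2
  cases hw with
  | refl =>
    have h1 : r.1 = u.1 := le_antisymm hrv1 hur1
    have h2 : r.2 = u.2 := le_antisymm hrv2 hur2
    have : r = u := Prod.ext h1 h2
    rwa [this]
  | @head _ q _ m hstep hw' =>
    have hq : q ∈ S := hstep.2.1
    have hv : v ∈ S := hw'.mem_right hq
    obtain ⟨hu1, hu2⟩ := hhalf u hu
    obtain ⟨hv1, hv2⟩ := hhalf v hv
    rcases step_shape hhalf hstep with ⟨e1, e2 | e2⟩ | ⟨e2, e1 | e1⟩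
    · -- q = (u.1, u.2 + 1)
      by_cases hcase : u.2 + 1 ≤ v.2
      · by_cases hrc : u.2 + 1 ≤ r.2
        · exact IH m (by omega) q v r hw' hq hr1 hr2 (by rw [e1]; exact hur1) hrv1
            (by rw [e2]; exact hrc) hrv2
        · -- r.2 = u.2 ; fill the row y = u.2 rightwards
          push_neg at hrc
          have hr2eq : r.2 = u.2 := half_squeeze hr2 hu2 hur2 hrc
          obtain ⟨k, hk⟩ : ∃ k : ℕ, r.1 = u.1 + k := by
            obtain ⟨zr, hzr⟩ := hr1
            obtain ⟨zu, hzu⟩ := hu1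
            have hd : (0 : ℤ) ≤ zr - zu := by
              have : (zu : ℚ) ≤ zr := by rw [hzr, hzu] at hur1; linarith
              have : zu ≤ zr := by exact_mod_cast this
              omega
            refine ⟨(zr - zu).toNat, ?_⟩
            have hcast : ((zr - zu).toNat : ℚ) = ((zr : ℚ) - zu) := by
              exact_mod_cast congrArg (fun z : ℤ => (z : ℚ)) (Int.toNat_of_nonneg hd)
            rw [hzr, hzu, hcast]
            ring
          have fill : ∀ j : ℕ, (j : ℚ) ≤ (k : ℚ) → (u.1 + j, u.2) ∈ S := by
            intro j
            induction j with
            | zero => intro _; simpa using hu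
            | succ j ihj =>
              intro hj
              have hj1 : ((j : ℚ)) + 1 ≤ (k : ℚ) := by push_cast at hj; linarith
              have hprev := ihj (by linarith)
              have htop : (u.1 + j + 1, u.2 + 1) ∈ S := by
                apply IH m (by omega) q v (u.1 + j + 1, u.2 + 1) hw' hq
                · obtain ⟨zu, hzu⟩ := hu1
                  exact ⟨zu + j + 1, by push_cast; rw [hzu]; ring⟩
                · obtain ⟨zu, hzu⟩ := hu2
                  exact ⟨zu + 1, by push_cast; rw [hzu]; ring⟩
                · show q.1 ≤ u.1 + j + 1
                  rw [e1]
                  have : (0:ℚ) ≤ (j:ℚ) := by positivity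
                  linarith
                · show u.1 + j + 1 ≤ v.1
                  have : r.1 ≤ v.1 := hrv1
                  rw [hk] at this
                  linarith
                · show q.2 ≤ u.2 + 1
                  rw [e2]
                · exact hcase
              have hc := (hclosure (u.1 + j) u.2 hprev (by
                have : u.1 + (j:ℚ) + 1 = u.1 + j + 1 := by ring
                simpa [this] using htop)).1
              have : u.1 + ((j:ℕ)+1 : ℕ) = u.1 + j + 1 := by push_cast; ring
              rwa [this]
          have hfin := fill k le_rfl
          have : r = (u.1 + k, u.2) := Prod.ext hk hr2eq
          rwa [this]
      · -- v.2 = u.2 ; split the walk at the horizontal line between u.2 and u.2+1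
        push_neg at hcase
        have hv2eq : v.2 = u.2 := half_squeeze hv2 hu2 (le_trans hur2 hrv2) hcase
        have hr2eq : r.2 = u.2 := le_antisymm (hrv2.trans hv2eq.le) hur2
        obtain ⟨x, m1, m2, hm, w1, hmid, w2⟩ := cut2 hhalf hu2 hw'
          (by rw [e2]) (by rw [hv2eq])
        have hxS : (x, u.2 + 1) ∈ S := hmid.1
        have hx'S : (x, u.2) ∈ S := hmid.2.1
        rcases le_or_gt x r.1 with hxr | hxr
        · exact IH m2 (by omega) (x, u.2) v r w2 hx'S hr1 hr2 hxr hrv1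
            (by show (x, u.2).2 ≤ r.2; rw [hr2eq]) hrv2
        · have wup : W S (m1 + 1) u (x, u.2 + 1) := W.head hstep w1
          exact IH (m1 + 1) (by omega) u (x, u.2 + 1) r wup hu hr1 hr2 hur1
            (le_of_lt hxr) hur2 (by show r.2 ≤ (x, u.2+1).2; show r.2 ≤ u.2 + 1; linarith)
    · -- q = (u.1, u.2 - 1) : direct
      exact IH m (by omega) q v r hw' hq hr1 hr2 (by rw [e1]; exact hur1) hrv1
        (by rw [e2]; linarith) hrv2
    · -- q = (u.1 + 1, u.2)
      by_cases hcase : u.1 + 1 ≤ v.1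
      · by_cases hrc : u.1 + 1 ≤ r.1
        · exact IH m (by omega) q v r hw' hq hr1 hr2 (by rw [e1]; exact hrc) hrv1
            (by rw [e2]; exact hur2) hrv2
        · push_neg at hrc
          have hr1eq : r.1 = u.1 := half_squeeze hr1 hu1 hur1 hrc
          obtain ⟨k, hk⟩ : ∃ k : ℕ, r.2 = u.2 + k := by
            obtain ⟨zr, hzr⟩ := hr2
            obtain ⟨zu, hzu⟩ := hu2
            have hd : (0 : ℤ) ≤ zr - zu := by
              have : (zu : ℚ) ≤ zr := by rw [hzr, hzu] at hur2; linarith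
              have : zu ≤ zr := by exact_mod_cast this
              omega
            refine ⟨(zr - zu).toNat, ?_⟩
            have hcast : ((zr - zu).toNat : ℚ) = ((zr : ℚ) - zu) := by
              exact_mod_cast congrArg (fun z : ℤ => (z : ℚ)) (Int.toNat_of_nonneg hd)
            rw [hzr, hzu, hcast]
            ring
          have fill : ∀ j : ℕ, (j : ℚ) ≤ (k : ℚ) → (u.1, u.2 + j) ∈ S := by
            intro j
            induction j with
            | zero => intro _; simpa using hu
            | succ j ihj =>
              intro hj
              have hj1 : ((j : ℚ)) + 1 ≤ (k : ℚ) := by push_cast at hj; linarith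
              have hprev := ihj (by linarith)
              have htop : (u.1 + 1, u.2 + j + 1) ∈ S := by
                apply IH m (by omega) q v (u.1 + 1, u.2 + j + 1) hw' hq
                · obtain ⟨zu, hzu⟩ := hu1
                  exact ⟨zu + 1, by push_cast; rw [hzu]; ring⟩
                · obtain ⟨zu, hzu⟩ := hu2
                  exact ⟨zu + j + 1, by push_cast; rw [hzu]; ring⟩
                · show q.1 ≤ u.1 + 1
                  rw [e1]
                · exact hcase
                · show q.2 ≤ u.2 + j + 1
                  rw [e2]
                  have : (0:ℚ) ≤ (j:ℚ) := by positivity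
                  linarith
                · show u.2 + j + 1 ≤ v.2
                  have : r.2 ≤ v.2 := hrv2
                  rw [hk] at this
                  linarith
              have hc := (hclosure u.1 (u.2 + j) hprev (by
                have : u.2 + (j:ℚ) + 1 = u.2 + j + 1 := by ring
                simpa [this] using htop)).2
              have : u.2 + ((j:ℕ)+1 : ℕ) = u.2 + j + 1 := by push_cast; ring
              rwa [this]
          have hfin := fill k le_rfl
          have : r = (u.1, u.2 + k) := Prod.ext hr1eq hk
          rwa [this]
      · push_neg at hcase
        have hv1eq : v.1 = u.1 := half_squeeze hv1 hu1 (le_trans hur1 hrv1) hcase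
        have hr1eq : r.1 = u.1 := le_antisymm (hrv1.trans hv1eq.le) hur1
        obtain ⟨y, m1, m2, hm, w1, hmid, w2⟩ := cut1 hhalf hu1 hw'
          (by rw [e1]) (by rw [hv1eq])
        have hxS : (u.1 + 1, y) ∈ S := hmid.1
        have hx'S : (u.1, y) ∈ S := hmid.2.1
        rcases le_or_gt y r.2 with hyr | hyr
        · exact IH m2 (by omega) (u.1, y) v r w2 hx'S hr1 hr2
            (by show (u.1, y).1 ≤ r.1; rw [hr1eq]) hrv1 hyr hrv2
        · have wup : W S (m1 + 1) u (u.1 + 1, y) := W.head hstep w1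
          exact IH (m1 + 1) (by omega) u (u.1 + 1, y) r wup hu hr1 hr2 hur1
            (by show r.1 ≤ u.1 + 1; linarith) hur2 (le_of_lt hyr)
    · -- q = (u.1 - 1, u.2) : direct
      exact IH m (by omega) q v r hw' hq hr1 hr2 (by rw [e1]; linarith) hrv1
        (by rw [e2]; exact hur2) hrv2


lemma half_pos {a : ℚ} (ha : Half a) (h : 0 < a) : 1/2 ≤ a := by
  obtain ⟨z, hz⟩ := ha
  have : (0 : ℚ) ≤ z := by
    by_contra hc
    push_neg at hc
    have : z < 0 := by exact_mod_cast hc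
    have : z ≤ -1 := by omega
    have : (z : ℚ) ≤ -1 := by exact_mod_cast this
    linarith [hz ▸ h]
  linarith [hz]

lemma half_ne_zero {a : ℚ} (ha : Half a) : a ≠ 0 := by
  obtain ⟨z, hz⟩ := ha
  intro h
  rw [h] at hz
  have : (2 * z : ℚ) = -1 := by linarith
  have : (2 * z : ℤ) = -1 := by exact_mod_cast this
  omega


end Stmt15


open Stmt15 in
theorem stmt15 (S : Finset (ℚ × ℚ)) (hne : S.Nonempty)
    (hhalf : ∀ p ∈ S, (∃ z : ℤ, p.1 = z + 1/2) ∧ ∃ z : ℤ, p.2 = z + 1/2)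
    (hsym : ∀ p : ℚ × ℚ, p ∈ S ↔ (-p.1, -p.2) ∈ S)
    (hclosure : ∀ i j : ℚ, (i, j) ∈ S → (i + 1, j + 1) ∈ S →
      (i + 1, j) ∈ S ∧ (i, j + 1) ∈ S)
    (hconn : ∀ p ∈ S, ∀ q ∈ S, Relation.ReflTransGen
      (fun u v : ℚ × ℚ => u ∈ S ∧ v ∈ S ∧ (u.1 - v.1) ^ 2 + (u.2 - v.2) ^ 2 = 1) p q) :
    ((1 : ℚ)/2, (1 : ℚ)/2) ∈ S := by
  have hhalf' : ∀ p ∈ S, Half p.1 ∧ Half p.2 := hhalf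
  obtain ⟨p, hp⟩ := hne
  have hnp : (-p.1, -p.2) ∈ S := (hsym p).mp hp
  -- choose a point q with q.2 > 0
  have hp2 : Half p.2 := (hhalf' p hp).2
  have hp2ne : p.2 ≠ 0 := half_ne_zero hp2
  obtain ⟨q, hqS, hq2⟩ : ∃ q : ℚ × ℚ, q ∈ S ∧ 1/2 ≤ q.2 := by
    rcases lt_or_gt_of_ne hp2ne with h | h
    · refine ⟨(-p.1, -p.2), hnp, half_pos ?_ (by simpa using h)⟩
      obtain ⟨z, hz⟩ := hp2
      exact ⟨-z - 1, by push_cast; rw [hz]; ring⟩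
    · exact ⟨p, hp, half_pos hp2 h⟩
  have hnqS : (-q.1, -q.2) ∈ S := (hsym q).mp hqS
  obtain ⟨n, hw⟩ := exists_W (S := S) (hconn q hqS (-q.1, -q.2) hnqS)
  obtain ⟨x, m1, m2, hm, w1, hmid, w2⟩ := cut2 hhalf' (c := -(1/2))
    ⟨-1, by norm_num⟩ hw (by show -(1/2) + 1 ≤ q.2; linarith) (by show -q.2 ≤ -(1/2); linarith)
  have e : (-(1/2) : ℚ) + 1 = 1/2 := by norm_num
  have hA : (x, (1:ℚ)/2) ∈ S := by rw [e] at hmid; exact hmid.1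
  have hB : (x, -(1/2 : ℚ)) ∈ S := hmid.2.1
  have hC : (-x, (1:ℚ)/2) ∈ S := by
    have := (hsym (x, -(1/2))).mp hB
    simpa using this
  have hx : Half x := (hhalf' (x, (1:ℚ)/2) hA).1
  have hxne : x ≠ 0 := half_ne_zero hx
  rcases lt_or_gt_of_ne hxne with h | h
  · -- x < 0 : from (x, 1/2) to (-x, 1/2)
    have hxb : 1/2 ≤ -x := half_pos (by
      obtain ⟨z, hz⟩ := hx
      exact ⟨-z - 1, by push_cast; rw [hz]; ring⟩) (by linarith)
    obtain ⟨k, hwk⟩ := exists_W (S := S) (hconn (x, (1:ℚ)/2) hA (-x, (1:ℚ)/2) hC)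
    exact rect hhalf' hclosure k (x, (1:ℚ)/2) (-x, (1:ℚ)/2) ((1:ℚ)/2, (1:ℚ)/2) hwk hA
      ⟨0, by norm_num⟩ ⟨0, by norm_num⟩ (by show x ≤ 1/2; linarith) (by show (1:ℚ)/2 ≤ -x; linarith)
      le_rfl le_rfl
  · -- x > 0 : from (-x, 1/2) to (x, 1/2)
    have hxb : 1/2 ≤ x := half_pos hx h
    obtain ⟨k, hwk⟩ := exists_W (S := S) (hconn (-x, (1:ℚ)/2) hC (x, (1:ℚ)/2) hA)
    exact rect hhalf' hclosure k (-x, (1:ℚ)/2) (x, (1:ℚ)/2) ((1:ℚ)/2, (1:ℚ)/2) hwk hC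
      ⟨0, by norm_num⟩ ⟨0, by norm_num⟩ (by show -x ≤ 1/2; linarith) (by show (1:ℚ)/2 ≤ x; linarith)
      le_rfl le_rfl
end
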